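/- arXiv:2003.03371 — 5 statements merged into one kernel-verified Lean document; each statement's English description precedes it below -/
import Mathlib

section
/- Let R be an alternative ring with idempotent e1 and let e2 denote the complementary Peirce projection (e2(a) = a - e1·a on the left, a - a·e1 on the right). Then for any a in R and i,j in {1,2}, (e_i·a)·e_j = e_i·(a·e_j). -/
/-- Left action of the Peirce "idempotents" `e₁` and `e₂`
(`e₂` acts by `a ↦ a - e₁ a` on the left). -/
def peirceL {R : Type*} [NonUnitalNonAssocRing R] (e1 : R) : Fin 2 → R → R :=
  fun i a => if i = 0 then e1 * a else a - e1 * a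

/-- Right action of the Peirce "idempotents" (`e₂` acts by `a ↦ a - a e₁`). -/
def peirceR {R : Type*} [NonUnitalNonAssocRing R] (e1 : R) : Fin 2 → R → R :=
  fun j a => if j = 0 then a * e1 else a - a * e1

/-! Linearising the left alternative law at `x + y` makes the associator skew in its first two
arguments, so `(x, y, x) = -(y, x, x) = 0` by the right alternative law: the ring is flexible.
Expanding the Peirce projections, each of the four identities `(eᵢ a) eⱼ = eᵢ (a eⱼ)` reduces to
the flexible law `(e₁ a) e₁ = e₁ (a e₁)`. -/

section Alternative

variable {R : Type*} [NonUnitalNonAssocRing R]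

theorem associator_swap_left_of_alternative
    (alt_left : ∀ x y : R, (x * x) * y = x * (x * y)) (x y z : R) :
    associator y x z = -associator x y z := by
  have h := alt_left (x + y) z
  simp only [add_mul, mul_add, alt_left x z, alt_left y z] at h
  simp only [associator_apply]
  linear_combination (norm := abel) h

theorem flexible_of_alternative
    (alt_left : ∀ x y : R, (x * x) * y = x * (x * y))
    (alt_right : ∀ x y : R, (y * x) * x = y * (x * x)) (x y : R) :
    (x * y) * x = x * (y * x) := by
  have hyxx : associator y x x = 0 := sub_eq_zero.mpr (alt_right x y)
  rwa [associator_swap_left_of_alternative alt_left, neg_eq_zero, associator_apply,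
    sub_eq_zero] at hyxx

theorem peirceR_peirceL_comm {e1 a : R} (flex : (e1 * a) * e1 = e1 * (a * e1)) (i j : Fin 2) :
    peirceR e1 j (peirceL e1 i a) = peirceL e1 i (peirceR e1 j a) := by
  fin_cases i <;> fin_cases j <;>
    simp only [peirceL, peirceR, mul_sub, sub_mul, flex, Fin.zero_eta, Fin.mk_one, one_ne_zero,
      if_true, if_false]
  all_goals abel

end Alternative

theorem peirce_assoc_general (R : Type*) [NonUnitalNonAssocRing R]
    (alt_left : ∀ x y : R, (x * x) * y = x * (x * y))
    (alt_right : ∀ x y : R, (y * x) * x = y * (x * x))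
    (e1 : R) :
    ∀ (i j : Fin 2) (a : R), peirceR e1 j (peirceL e1 i a) = peirceL e1 i (peirceR e1 j a) :=
  fun i j a => peirceR_peirceL_comm (flexible_of_alternative alt_left alt_right e1 a) i j

/-- In an alternative ring with idempotent `e₁`, `(eᵢ a) eⱼ = eᵢ (a eⱼ)`. -/
theorem peirce_assoc (R : Type*) [NonUnitalNonAssocRing R]
    (alt_left : ∀ x y : R, (x * x) * y = x * (x * y))
    (alt_right : ∀ x y : R, (y * x) * x = y * (x * x))
    (e1 : R) (he : e1 * e1 = e1) :
    ∀ (i j : Fin 2) (a : R), peirceR e1 j (peirceL e1 i a) = peirceL e1 i (peirceR e1 j a) :=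
  peirce_assoc_general R alt_left alt_right e1
end

section
/- Let R be an alternative ring with a nontrivial idempotent e1 and Peirce decomposition. Then xy = -yx for all x, y in Rij with i ≠ j. -/
/-! Linearizing the left alternative law `(x x) z = x (x z)` at `e_i` gives
`(x y + y x) e_i = x (y e_i) + y (x e_i) = 0`, since `e_i` annihilates `R_ij` from the right.
Linearizing the right alternative law shows that `e_i` also fixes `x y` and `y x` from the right,
so `x y + y x = 0`. -/

/-- The Peirce component `e R f = {x | e x = x ∧ x f = x}`. -/
def peirceSet {R : Type*} [NonAssocRing R] (e f : R) : Set R :=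
  {x | e * x = x ∧ x * f = x}

section Alternative

variable {R : Type*} [NonAssocRing R]

theorem add_mul_comm_mul_of_alternative_left
    (alt_left : ∀ x y : R, (x * x) * y = x * (x * y)) (x y z : R) :
    (x * y + y * x) * z = x * (y * z) + y * (x * z) := by
  have h := alt_left (x + y) z
  simp only [add_mul, mul_add, alt_left] at h
  rw [add_mul]
  grind

theorem mul_add_mul_comm_of_alternative_right
    (alt_right : ∀ x y : R, (y * x) * x = y * (x * x)) (x y z : R) :
    z * (x * y + y * x) = (z * x) * y + (z * y) * x := by
  have h := alt_right (x + y) z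
  simp only [add_mul, mul_add, alt_right] at h
  rw [mul_add]
  grind

theorem mul_mul_eq_self_of_alternative_right
    (alt_right : ∀ x y : R, (y * x) * x = y * (x * x)) {e x y : R}
    (hey : e * y = y) (hxe : x * e = 0) (hye : y * e = 0) :
    (x * y) * e = x * y := by
  have h := mul_add_mul_comm_of_alternative_right alt_right e y x
  rw [hey, hye, hxe, add_zero, zero_mul, zero_add] at h
  exact h.symm

theorem mul_eq_neg_mul_of_alternative
    (alt_left : ∀ x y : R, (x * x) * y = x * (x * y))
    (alt_right : ∀ x y : R, (y * x) * x = y * (x * x)) {e x y : R}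
    (hex : e * x = x) (hey : e * y = y) (hxe : x * e = 0) (hye : y * e = 0) :
    x * y = -(y * x) := by
  have hsum := add_mul_comm_mul_of_alternative_left alt_left x y e
  rw [add_mul, mul_mul_eq_self_of_alternative_right alt_right hey hxe hye,
    mul_mul_eq_self_of_alternative_right alt_right hex hye hxe, hxe, hye,
    mul_zero, mul_zero, add_zero] at hsum
  exact eq_neg_of_add_eq_zero_left hsum

end Alternative

theorem mul_eq_zero_of_mul_eq_self_of_add_eq_one {R : Type*} [NonAssocRing R] {e f x : R}
    (hef : e + f = 1) (hxf : x * f = x) : x * e = 0 := by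
  rw [eq_sub_of_add_eq hef, mul_sub, mul_one, hxf, sub_self]

theorem Fin.two_add_eq_of_ne {M : Type*} [AddCommMagma M] {e : Fin 2 → M} {a : M}
    (he : e 0 + e 1 = a) {i j : Fin 2} (hij : i ≠ j) : e i + e j = a := by
  fin_cases i <;> fin_cases j <;> first | exact absurd rfl hij | simpa [add_comm] using he

theorem peirce_anticomm_general (R : Type*) [NonAssocRing R]
    (alt_left : ∀ x y : R, (x * x) * y = x * (x * y))
    (alt_right : ∀ x y : R, (y * x) * x = y * (x * x))
    (e1 : R)
    (e : Fin 2 → R) (h1 : e 0 = e1) (h2 : e 1 = 1 - e1) :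
    ∀ (i j : Fin 2), i ≠ j → ∀ x ∈ peirceSet (e i) (e j), ∀ y ∈ peirceSet (e i) (e j),
      x * y = -(y * x) := by
  rintro i j hij x ⟨hex, hxf⟩ y ⟨hey, hyf⟩
  have hsum : e i + e j = 1 :=
    Fin.two_add_eq_of_ne (by rw [h1, h2, add_sub_cancel]) hij
  exact mul_eq_neg_mul_of_alternative alt_left alt_right hex hey
    (mul_eq_zero_of_mul_eq_self_of_add_eq_one hsum hxf)
    (mul_eq_zero_of_mul_eq_self_of_add_eq_one hsum hyf)

/-- In an alternative ring with a nontrivial idempotent, `xy = -yx` for `x, y ∈ Rᵢⱼ`, `i ≠ j`. -/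
theorem peirce_anticomm (R : Type*) [NonAssocRing R]
    (alt_left : ∀ x y : R, (x * x) * y = x * (x * y))
    (alt_right : ∀ x y : R, (y * x) * x = y * (x * x))
    (e1 : R) (he : e1 * e1 = e1) (he0 : e1 ≠ 0) (he1 : e1 ≠ 1)
    (e : Fin 2 → R) (h1 : e 0 = e1) (h2 : e 1 = 1 - e1) :
    ∀ (i j : Fin 2), i ≠ j → ∀ x ∈ peirceSet (e i) (e j), ∀ y ∈ peirceSet (e i) (e j),
      x * y = -(y * x) :=
  peirce_anticomm_general R alt_left alt_right e1 e h1 h2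
end

section
/- Let R and R' be 2-torsion free alternative rings that are ℚ-algebras, and φ: R → R' a surjective Lie multiplicative map that preserves idempotents. Then φ(λr) = λφ(r) for every λ ∈ ℚ and r ∈ R. In particular φ(0) = 0 and φ(-r) = -φ(r). -/
/-!
Put `p = φ (l • r) - l • φ r`. Both `l • r - l • r` and `r - l⁻¹ • (l • r)` vanish, so `p` and
`φ r - l⁻¹ • φ (l • r) = -l⁻¹ • p` are idempotent; two idempotents on the same line through `0`
with ratio `c ∉ {0, 1}` force `p = 0`. This covers every `l ∉ {0, -1}`; the case `l = 0` is
`φ 0 = φ [0, 0] = 0`, and `-1 = -2 · ½` reduces `l = -1` to the generic case.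
-/

instance Rat.isScalarTower_mul {A : Type*} [NonUnitalNonAssocRing A] [Module ℚ A] :
    IsScalarTower ℚ A A :=
  ⟨fun q x y => map_rat_smul (AddMonoidHom.mulRight y) q x⟩

theorem IsIdempotentElem.eq_zero_of_smul {K A : Type*} [Field K] [NonUnitalNonAssocRing A]
    [Module K A] [IsScalarTower K A A] [SMulCommClass K A A] {p : A} {c : K}
    (hp : IsIdempotentElem p) (hcp : IsIdempotentElem (c • p)) (hc0 : c ≠ 0) (hc1 : c ≠ 1) :
    p = 0 := by
  by_contra hp0
  have hsq : (c * c) • p = c • p := by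
    conv_lhs => rw [← hp.eq, ← smul_mul_smul, hcp.eq]
  have hc : IsIdempotentElem c := smul_left_injective K hp0 hsq
  exact (IsIdempotentElem.iff_eq_zero_or_one.mp hc).elim hc0 hc1

section IdempotentPreserving

variable {R R' : Type*} [NonUnitalNonAssocRing R] [NonUnitalNonAssocRing R']
  [Module ℚ R] [Module ℚ R'] {φ : R → R'}

theorem map_rat_smul_of_ne_of_ne
    (hidem : ∀ (e f : R) (l : ℚ),
      IsIdempotentElem (e - l • f) ↔ IsIdempotentElem (φ e - l • φ f))
    {l : ℚ} (hl0 : l ≠ 0) (hl1 : l ≠ -1) (r : R) : φ (l • r) = l • φ r := by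
  have hp : IsIdempotentElem (φ (l • r) - l • φ r) := by
    rw [← hidem, sub_self]
    exact .zero
  have hq : IsIdempotentElem (φ r - l⁻¹ • φ (l • r)) := by
    rw [← hidem, smul_smul, inv_mul_cancel₀ hl0, one_smul, sub_self]
    exact .zero
  have hq_eq : φ r - l⁻¹ • φ (l • r) = (-l⁻¹) • (φ (l • r) - l • φ r) := by
    rw [smul_sub, smul_smul, neg_mul, inv_mul_cancel₀ hl0, neg_smul, neg_smul, one_smul]
    abel
  rw [hq_eq] at hq
  refine sub_eq_zero.mp (hp.eq_zero_of_smul hq (by simpa using hl0) fun h => hl1 ?_)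
  rw [← inv_inv l, ← neg_neg l⁻¹, h, inv_neg, inv_one]

theorem map_rat_smul_of_map_zero
    (hidem : ∀ (e f : R) (l : ℚ),
      IsIdempotentElem (e - l • f) ↔ IsIdempotentElem (φ e - l • φ f))
    (h0 : φ 0 = 0) (l : ℚ) (r : R) : φ (l • r) = l • φ r := by
  by_cases hl0 : l = 0
  · rw [hl0, zero_smul, zero_smul, h0]
  by_cases hl1 : l = -1
  · have hsplit : l = -2 * (1 / 2) := by rw [hl1]; norm_num
    rw [hsplit, mul_smul, mul_smul, map_rat_smul_of_ne_of_ne hidem (by norm_num) (by norm_num),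
      map_rat_smul_of_ne_of_ne hidem (by norm_num) (by norm_num)]
  · exact map_rat_smul_of_ne_of_ne hidem hl0 hl1 r

end IdempotentPreserving

theorem lie_map_rat_homogeneous_general (R R' : Type*) [NonUnitalNonAssocRing R] [NonUnitalNonAssocRing R']
    [Module ℚ R] [Module ℚ R']
    (φ : R → R')
    (hlie : ∀ x y : R, φ (x * y - y * x) = φ x * φ y - φ y * φ x)
    (hidem : ∀ (e f : R) (l : ℚ),
      IsIdempotentElem (e - l • f) ↔ IsIdempotentElem (φ e - l • φ f)) :
    (∀ (l : ℚ) (r : R), φ (l • r) = l • φ r) ∧ φ 0 = 0 ∧ ∀ r : R, φ (-r) = -φ r := by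
  have h0 : φ 0 = 0 := by simpa using hlie 0 0
  have hhom := map_rat_smul_of_map_zero hidem h0
  refine ⟨hhom, h0, fun r => ?_⟩
  simpa only [neg_one_smul] using hhom (-1) r

/-- A surjective Lie multiplicative idempotent-preserving map between
2-torsion free alternative ℚ-algebras is ℚ-homogeneous; in particular it
kills `0` and commutes with negation. -/
theorem lie_map_rat_homogeneous (R R' : Type*) [NonUnitalNonAssocRing R] [NonUnitalNonAssocRing R']
    [Module ℚ R] [Module ℚ R']
    (altR_left : ∀ x y : R, (x * x) * y = x * (x * y))
    (altR_right : ∀ x y : R, (y * x) * x = y * (x * x))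
    (altR'_left : ∀ x y : R', (x * x) * y = x * (x * y))
    (altR'_right : ∀ x y : R', (y * x) * x = y * (x * x))
    (tf2R : ∀ x : R, (2 : ℕ) • x = 0 → x = 0)
    (tf2R' : ∀ x : R', (2 : ℕ) • x = 0 → x = 0)
    (φ : R → R') (hsurj : Function.Surjective φ)
    (hlie : ∀ x y : R, φ (x * y - y * x) = φ x * φ y - φ y * φ x)
    (hidem : ∀ (e f : R) (l : ℚ),
      IsIdempotentElem (e - l • f) ↔ IsIdempotentElem (φ e - l • φ f)) :
    (∀ (l : ℚ) (r : R), φ (l • r) = l • φ r) ∧ φ 0 = 0 ∧ ∀ r : R, φ (-r) = -φ r :=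
  lie_map_rat_homogeneous_general R R' φ hlie hidem
end

section
/- Let R be a 2,3-torsion free alternative ring with nontrivial idempotent e1 and Peirce decomposition satisfying: (1) x_ij R_ji = 0 implies x_ij = 0 for i ≠ j; (2) x11 R12 = 0 or R21 x11 = 0 implies x11 = 0; (3) R12 x22 = 0 or x22 R21 = 0 implies x22 = 0. Then if [a11 + a22, R12] = 0 then a11 + a22 lies in the commutative centre Z(R), and similarly if [a11 + a22, R21] = 0 then a11 + a22 ∈ Z(R). -/
/-- The commutative centre `{z | ∀ x, z x = x z}`. -/
def commCentre (R : Type*) [NonAssocRing R] : Set R :=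
  {z | ∀ x : R, z * x = x * z}

class IsAlternative (R : Type*) [NonAssocRing R] : Prop where
  mul_self_mul (x y : R) : x * x * y = x * (x * y)
  mul_mul_self (x y : R) : y * x * x = y * (x * x)

structure ComplementaryIdempotents {R : Type*} [NonAssocRing R] (e f : R) : Prop where
  isIdempotentElem : IsIdempotentElem e
  add_eq_one : e + f = 1

theorem sub_mem_peirceSet {R : Type*} [NonAssocRing R] {e f x y : R}
    (hx : x ∈ peirceSet e f) (hy : y ∈ peirceSet e f) : x - y ∈ peirceSet e f :=
  ⟨by rw [mul_sub, hx.1, hy.1], by rw [sub_mul, hx.2, hy.2]⟩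

section Alternative

variable {R : Type*} [NonAssocRing R] [IsAlternative R]

theorem left_alternative_linear (x y z : R) :
    x * y * z + y * x * z = x * (y * z) + y * (x * z) := by
  have h := IsAlternative.mul_self_mul (x + y) z
  simp only [add_mul, mul_add] at h
  linear_combination (norm := abel1)
    h - IsAlternative.mul_self_mul x z - IsAlternative.mul_self_mul y z

theorem right_alternative_linear (x y z : R) :
    x * y * z + x * z * y = x * (y * z) + x * (z * y) := by
  have h := IsAlternative.mul_mul_self (y + z) x
  simp only [add_mul, mul_add] at h
  linear_combination (norm := abel1)
    h - IsAlternative.mul_mul_self y x - IsAlternative.mul_mul_self z x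

theorem mul_assoc_of_mul_eq_zero_left {x y z : R} (h₁ : y * x = 0) (h₂ : y * (x * z) = 0) :
    x * y * z = x * (y * z) := by
  simpa [h₁, h₂] using left_alternative_linear x y z

theorem mul_assoc_of_mul_eq_zero_right {x y z : R} (h₁ : x * z * y = 0) (h₂ : x * (z * y) = 0) :
    x * y * z = x * (y * z) := by
  simpa [h₁, h₂] using right_alternative_linear x y z

namespace IsIdempotentElem

variable {e : R}

theorem mul_mul_self_left (he : IsIdempotentElem e) (x : R) : e * (e * x) = e * x := by
  rw [← IsAlternative.mul_self_mul, he.eq]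

theorem mul_mul_self_right (he : IsIdempotentElem e) (x : R) : x * e * e = x * e := by
  rw [IsAlternative.mul_mul_self, he.eq]

theorem eq_zero_of_mul_left_eq_add_self (he : IsIdempotentElem e)
    (htf : ∀ x : R, (2 : ℕ) • x = 0 → x = 0) {v : R} (hv : e * v = v + v) : v = 0 := by
  have h := he.mul_mul_self_left v
  rw [hv, mul_add, hv] at h
  exact htf v (by rw [two_nsmul]; exact add_eq_left.mp h)

theorem eq_zero_of_mul_right_eq_add_self (he : IsIdempotentElem e)
    (htf : ∀ x : R, (2 : ℕ) • x = 0 → x = 0) {v : R} (hv : v * e = v + v) : v = 0 := by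
  have h := he.mul_mul_self_right v
  rw [hv, add_mul, hv] at h
  exact htf v (by rw [two_nsmul]; exact add_eq_left.mp h)

end IsIdempotentElem

end Alternative

namespace ComplementaryIdempotents

variable {R : Type*} [NonAssocRing R] {e f : R}

theorem eq_one_sub (h : ComplementaryIdempotents e f) : f = 1 - e :=
  eq_sub_of_add_eq' h.add_eq_one

theorem symm (h : ComplementaryIdempotents e f) : ComplementaryIdempotents f e :=
  ⟨h.eq_one_sub ▸ h.isIdempotentElem.one_sub, by rw [add_comm, h.add_eq_one]⟩

theorem mul_eq_zero (h : ComplementaryIdempotents e f) : e * f = 0 := by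
  rw [h.eq_one_sub, h.isIdempotentElem.mul_one_sub_self]

theorem mul_left_eq_self_iff (h : ComplementaryIdempotents e f) {x : R} :
    f * x = x ↔ e * x = 0 := by
  rw [h.eq_one_sub, sub_mul, one_mul, sub_eq_self]

theorem mul_right_eq_self_iff (h : ComplementaryIdempotents e f) {x : R} :
    x * f = x ↔ x * e = 0 := by
  rw [h.eq_one_sub, mul_sub, mul_one, sub_eq_self]

theorem peirce_decomposition (h : ComplementaryIdempotents e f) (r : R) :
    e * (r * e) + e * (r * f) + (f * (r * e) + f * (r * f)) = r := by
  simp only [← mul_add, ← add_mul, h.add_eq_one, mul_one, one_mul]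

variable [IsAlternative R]

theorem mul_mul_eq_zero (h : ComplementaryIdempotents e f) (x : R) : e * (f * x) = 0 := by
  rw [h.eq_one_sub, sub_mul, one_mul, mul_sub, h.isIdempotentElem.mul_mul_self_left, sub_self]

theorem mul_mul_mem_peirceSet (h : ComplementaryIdempotents e f) {b : R} (hb : b = e ∨ b = f)
    (r : R) : e * (r * b) ∈ peirceSet e b := by
  refine ⟨h.isIdempotentElem.mul_mul_self_left _, ?_⟩
  rcases hb with rfl | rfl
  · have hlin := right_alternative_linear b (r * b) b
    rwa [h.isIdempotentElem.eq, h.isIdempotentElem.mul_mul_self_right,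
      h.isIdempotentElem.mul_mul_self_left, add_left_inj] at hlin
  · have hlin := right_alternative_linear e (r * b) b
    rwa [h.mul_eq_zero, zero_mul, add_zero, h.symm.isIdempotentElem.mul_mul_self_right,
      h.mul_mul_eq_zero, add_zero] at hlin

theorem mul_eq_zero_of_mem_peirceSet_self_left (h : ComplementaryIdempotents e f)
    (htf : ∀ x : R, (2 : ℕ) • x = 0 → x = 0) {g x y : R}
    (hx : x ∈ peirceSet e e) (hy : y ∈ peirceSet f g) : x * y = 0 := by
  refine h.isIdempotentElem.eq_zero_of_mul_left_eq_add_self htf ?_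
  have hlin := left_alternative_linear e x y
  rwa [hx.1, hx.2, h.mul_left_eq_self_iff.mp hy.1, mul_zero, add_zero, eq_comm] at hlin

theorem mul_eq_zero_of_mem_peirceSet_self_right (h : ComplementaryIdempotents e f)
    (htf : ∀ x : R, (2 : ℕ) • x = 0 → x = 0) {g x y : R}
    (hx : x ∈ peirceSet g f) (hy : y ∈ peirceSet e e) : x * y = 0 := by
  refine h.isIdempotentElem.eq_zero_of_mul_right_eq_add_self htf ?_
  have hlin := right_alternative_linear x y e
  rwa [hy.1, hy.2, h.mul_right_eq_self_iff.mp hx.2, zero_mul, add_zero] at hlin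

theorem mul_mem_peirceSet (h : ComplementaryIdempotents e f) {b c x y : R}
    (hb : b = e ∨ b = f) (hc : c = e ∨ c = f)
    (hx : x ∈ peirceSet e b) (hy : y ∈ peirceSet b c) : x * y ∈ peirceSet e c := by
  have hleft : e * (x * y) = e * x * y + x * e * y - x * (e * y) :=
    eq_sub_of_add_eq (left_alternative_linear e x y).symm
  have hright : x * y * e = x * (y * e) + x * (e * y) - x * e * y :=
    eq_sub_of_add_eq (right_alternative_linear x y e)
  rcases hb with rfl | rfl <;> rcases hc with rfl | rfl <;>
    simp only [peirceSet, Set.mem_ofPred_eq, h.mul_left_eq_self_iff,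
      h.mul_right_eq_self_iff] at hx hy ⊢ <;>
    simp only [hleft, hright, hx.1, hx.2, hy.1, hy.2, mul_zero, zero_mul] <;>
    constructor <;> abel

theorem mem_commCentre_of_forall_peirceSet (h : ComplementaryIdempotents e f) {z : R}
    (hee : ∀ x ∈ peirceSet e e, z * x = x * z) (hef : ∀ x ∈ peirceSet e f, z * x = x * z)
    (hfe : ∀ x ∈ peirceSet f e, z * x = x * z) (hff : ∀ x ∈ peirceSet f f, z * x = x * z) :
    z ∈ commCentre R := by
  intro r
  rw [← h.peirce_decomposition r]
  simp only [mul_add, add_mul]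
  rw [hee _ (h.mul_mul_mem_peirceSet (.inl rfl) r), hef _ (h.mul_mul_mem_peirceSet (.inr rfl) r),
    hfe _ (h.symm.mul_mul_mem_peirceSet (.inr rfl) r),
    hff _ (h.symm.mul_mul_mem_peirceSet (.inl rfl) r)]

theorem add_mem_commCentre_of_forall_peirceSet (h : ComplementaryIdempotents e f)
    (htf : ∀ x : R, (2 : ℕ) • x = 0 → x = 0) {a b : R}
    (ha : a ∈ peirceSet e e) (hb : b ∈ peirceSet f f)
    (hee : ∀ r ∈ peirceSet e e, a * r = r * a) (hef : ∀ x ∈ peirceSet e f, a * x = x * b)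
    (hfe : ∀ u ∈ peirceSet f e, b * u = u * a) (hff : ∀ s ∈ peirceSet f f, b * s = s * b) :
    a + b ∈ commCentre R := by
  refine h.mem_commCentre_of_forall_peirceSet (fun r hr => ?_) (fun x hx => ?_)
    (fun u hu => ?_) (fun s hs => ?_) <;> rw [add_mul, mul_add]
  · rw [h.symm.mul_eq_zero_of_mem_peirceSet_self_left htf hb hr,
      h.mul_eq_zero_of_mem_peirceSet_self_left htf hr hb, hee r hr]
  · rw [h.symm.mul_eq_zero_of_mem_peirceSet_self_left htf hb hx,
      h.mul_eq_zero_of_mem_peirceSet_self_right htf hx ha, hef x hx, add_zero, zero_add]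
  · rw [h.mul_eq_zero_of_mem_peirceSet_self_left htf ha hu,
      h.symm.mul_eq_zero_of_mem_peirceSet_self_right htf hu hb, hfe u hu, add_zero, zero_add]
  · rw [h.mul_eq_zero_of_mem_peirceSet_self_left htf ha hs,
      h.symm.mul_eq_zero_of_mem_peirceSet_self_left htf hs ha, hff s hs]

theorem mul_comm_of_mem_peirceSet_self_left (h : ComplementaryIdempotents e f)
    (htf : ∀ x : R, (2 : ℕ) • x = 0 → x = 0) {a b : R}
    (ha : a ∈ peirceSet e e) (hb : b ∈ peirceSet f f)
    (hab : ∀ x ∈ peirceSet e f, a * x = x * b)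
    (hnd : ∀ x ∈ peirceSet e e, (∀ y ∈ peirceSet e f, x * y = 0) → x = 0) :
    ∀ r ∈ peirceSet e e, a * r = r * a := by
  intro r hr
  refine sub_eq_zero.mp (hnd _ (sub_mem_peirceSet
    (h.mul_mem_peirceSet (.inl rfl) (.inl rfl) ha hr)
    (h.mul_mem_peirceSet (.inl rfl) (.inl rfl) hr ha)) fun x hx => ?_)
  have hax := h.mul_mem_peirceSet (.inl rfl) (.inr rfl) ha hx
  have hrx := h.mul_mem_peirceSet (.inl rfl) (.inr rfl) hr hx
  have hxr := h.mul_eq_zero_of_mem_peirceSet_self_right htf hx hr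
  have hxa := h.mul_eq_zero_of_mem_peirceSet_self_right htf hx ha
  have har_x : a * r * x = a * (r * x) := mul_assoc_of_mul_eq_zero_right
    (h.mul_eq_zero_of_mem_peirceSet_self_right htf hax hr) (by rw [hxr, mul_zero])
  have hra_x : r * a * x = r * (a * x) := mul_assoc_of_mul_eq_zero_right
    (h.mul_eq_zero_of_mem_peirceSet_self_right htf hrx ha) (by rw [hxa, mul_zero])
  have hrx_b : r * x * b = r * (x * b) := mul_assoc_of_mul_eq_zero_left hxr
    (by rw [h.mul_eq_zero_of_mem_peirceSet_self_left htf hr hb, mul_zero])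
  calc (a * r - r * a) * x = a * (r * x) - r * (a * x) := by rw [sub_mul, har_x, hra_x]
    _ = r * x * b - r * (x * b) := by rw [hab _ hrx, hab _ hx]
    _ = 0 := by rw [hrx_b, sub_self]

theorem mul_comm_of_mem_peirceSet_self_right (h : ComplementaryIdempotents e f)
    (htf : ∀ x : R, (2 : ℕ) • x = 0 → x = 0) {a b : R}
    (ha : a ∈ peirceSet e e) (hb : b ∈ peirceSet f f)
    (hab : ∀ x ∈ peirceSet e f, a * x = x * b)
    (hnd : ∀ x ∈ peirceSet f f, (∀ y ∈ peirceSet e f, y * x = 0) → x = 0) :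
    ∀ s ∈ peirceSet f f, b * s = s * b := by
  intro s hs
  refine sub_eq_zero.mp (hnd _ (sub_mem_peirceSet
    (h.symm.mul_mem_peirceSet (.inl rfl) (.inl rfl) hb hs)
    (h.symm.mul_mem_peirceSet (.inl rfl) (.inl rfl) hs hb)) fun x hx => ?_)
  have hxb := h.mul_mem_peirceSet (.inr rfl) (.inr rfl) hx hb
  have hxs := h.mul_mem_peirceSet (.inr rfl) (.inr rfl) hx hs
  have hx_bs : x * b * s = x * (b * s) := mul_assoc_of_mul_eq_zero_left
    (h.symm.mul_eq_zero_of_mem_peirceSet_self_left htf hb hx)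
    (h.symm.mul_eq_zero_of_mem_peirceSet_self_left htf hb hxs)
  have hx_sb : x * s * b = x * (s * b) := mul_assoc_of_mul_eq_zero_left
    (h.symm.mul_eq_zero_of_mem_peirceSet_self_left htf hs hx)
    (h.symm.mul_eq_zero_of_mem_peirceSet_self_left htf hs hxb)
  have hax_s : a * x * s = a * (x * s) := mul_assoc_of_mul_eq_zero_left
    (h.mul_eq_zero_of_mem_peirceSet_self_right htf hx ha)
    (by rw [h.mul_eq_zero_of_mem_peirceSet_self_left htf ha hs, mul_zero])
  calc x * (b * s - s * b) = x * b * s - x * s * b := by rw [mul_sub, hx_bs, hx_sb]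
    _ = a * x * s - a * (x * s) := by rw [← hab _ hx, hab _ hxs]
    _ = 0 := by rw [hax_s, sub_self]

theorem mul_eq_mul_of_mem_peirceSet_swap (h : ComplementaryIdempotents e f)
    (htf : ∀ x : R, (2 : ℕ) • x = 0 → x = 0) {a b : R}
    (ha : a ∈ peirceSet e e) (hb : b ∈ peirceSet f f)
    (hab : ∀ x ∈ peirceSet e f, a * x = x * b)
    (hbf : ∀ s ∈ peirceSet f f, b * s = s * b)
    (hnd : ∀ x ∈ peirceSet f e, (∀ y ∈ peirceSet e f, x * y = 0) → x = 0) :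
    ∀ u ∈ peirceSet f e, b * u = u * a := by
  intro u hu
  refine sub_eq_zero.mp (hnd _ (sub_mem_peirceSet
    (h.symm.mul_mem_peirceSet (.inl rfl) (.inr rfl) hb hu)
    (h.symm.mul_mem_peirceSet (.inr rfl) (.inr rfl) hu ha)) fun x hx => ?_)
  have hux := h.symm.mul_mem_peirceSet (.inr rfl) (.inl rfl) hu hx
  have hbx := h.symm.mul_eq_zero_of_mem_peirceSet_self_left htf hb hx
  have hub := h.symm.mul_eq_zero_of_mem_peirceSet_self_right htf hu hb
  have hbu_x : b * u * x = b * (u * x) := mul_assoc_of_mul_eq_zero_left hub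
    (by rw [hbx, mul_zero])
  have hua_x : u * a * x = u * (a * x) := mul_assoc_of_mul_eq_zero_left
    (h.mul_eq_zero_of_mem_peirceSet_self_left htf ha hu)
    (h.mul_eq_zero_of_mem_peirceSet_self_left htf ha hux)
  have hux_b : u * x * b = u * (x * b) := mul_assoc_of_mul_eq_zero_right
    (by rw [hub, zero_mul]) (by rw [hbx, mul_zero])
  calc (b * u - u * a) * x = b * (u * x) - u * (a * x) := by rw [sub_mul, hbu_x, hua_x]
    _ = b * (u * x) - u * x * b := by rw [hab _ hx, hux_b]
    _ = 0 := by rw [hbf _ hux, sub_self]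

theorem add_mem_commCentre_of_commute_peirceSet (h : ComplementaryIdempotents e f)
    (htf : ∀ x : R, (2 : ℕ) • x = 0 → x = 0) {a b : R}
    (ha : a ∈ peirceSet e e) (hb : b ∈ peirceSet f f)
    (hnd_ee : ∀ x ∈ peirceSet e e, (∀ y ∈ peirceSet e f, x * y = 0) → x = 0)
    (hnd_ff : ∀ x ∈ peirceSet f f, (∀ y ∈ peirceSet e f, y * x = 0) → x = 0)
    (hnd_fe : ∀ x ∈ peirceSet f e, (∀ y ∈ peirceSet e f, x * y = 0) → x = 0)
    (hcomm : ∀ x ∈ peirceSet e f, (a + b) * x = x * (a + b)) :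
    a + b ∈ commCentre R := by
  have hab : ∀ x ∈ peirceSet e f, a * x = x * b := fun x hx => by
    have hx' := hcomm x hx
    rwa [add_mul, mul_add, h.symm.mul_eq_zero_of_mem_peirceSet_self_left htf hb hx, add_zero,
      h.mul_eq_zero_of_mem_peirceSet_self_right htf hx ha, zero_add] at hx'
  have hbf := h.mul_comm_of_mem_peirceSet_self_right htf ha hb hab hnd_ff
  exact h.add_mem_commCentre_of_forall_peirceSet htf ha hb
    (h.mul_comm_of_mem_peirceSet_self_left htf ha hb hab hnd_ee) hab
    (h.mul_eq_mul_of_mem_peirceSet_swap htf ha hb hab hbf hnd_fe) hbf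

end ComplementaryIdempotents

theorem comm_with_offdiag_central_general (R : Type*) [NonAssocRing R]
    (alt_left : ∀ x y : R, (x * x) * y = x * (x * y))
    (alt_right : ∀ x y : R, (y * x) * x = y * (x * x))
    (tf2 : ∀ x : R, (2 : ℕ) • x = 0 → x = 0)
    (e1 : R) (he : e1 * e1 = e1)
    (e : Fin 2 → R) (h1 : e 0 = e1) (h2 : e 1 = 1 - e1)
    (cond1 : ∀ (i j : Fin 2), i ≠ j → ∀ x ∈ peirceSet (e i) (e j),
      (∀ r ∈ peirceSet (e j) (e i), x * r = 0) → x = 0)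
    (cond2 : ∀ x ∈ peirceSet (e 0) (e 0),
      ((∀ r ∈ peirceSet (e 0) (e 1), x * r = 0) ∨
       (∀ r ∈ peirceSet (e 1) (e 0), r * x = 0)) → x = 0)
    (cond3 : ∀ x ∈ peirceSet (e 1) (e 1),
      ((∀ r ∈ peirceSet (e 0) (e 1), r * x = 0) ∨
       (∀ r ∈ peirceSet (e 1) (e 0), x * r = 0)) → x = 0) :
    (∀ a ∈ peirceSet (e 0) (e 0), ∀ b ∈ peirceSet (e 1) (e 1),
      (∀ x ∈ peirceSet (e 0) (e 1), (a + b) * x = x * (a + b)) →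
        a + b ∈ commCentre R) ∧
    (∀ a ∈ peirceSet (e 0) (e 0), ∀ b ∈ peirceSet (e 1) (e 1),
      (∀ x ∈ peirceSet (e 1) (e 0), (a + b) * x = x * (a + b)) →
        a + b ∈ commCentre R) := by
  have : IsAlternative R := ⟨alt_left, alt_right⟩
  have h : ComplementaryIdempotents (e 0) (e 1) :=
    ⟨by rw [IsIdempotentElem, h1, he], by rw [h1, h2, add_sub_cancel]⟩
  refine ⟨fun a ha b hb hcomm => ?_, fun a ha b hb hcomm => ?_⟩
  · exact h.add_mem_commCentre_of_commute_peirceSet tf2 ha hb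
      (fun x hx hr => cond2 x hx (.inl hr)) (fun x hx hr => cond3 x hx (.inl hr))
      (cond1 1 0 (by decide)) hcomm
  · rw [add_comm] at hcomm ⊢
    exact h.symm.add_mem_commCentre_of_commute_peirceSet tf2 hb ha
      (fun x hx hr => cond3 x hx (.inr hr)) (fun x hx hr => cond2 x hx (.inr hr))
      (cond1 0 1 (by decide)) hcomm

/-- Under the nondegeneracy conditions (1)-(3), if `a₁₁ + a₂₂` commutes with
`R₁₂` (or with `R₂₁`) then it lies in the commutative centre. -/
theorem comm_with_offdiag_central (R : Type*) [NonAssocRing R]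
    (alt_left : ∀ x y : R, (x * x) * y = x * (x * y))
    (alt_right : ∀ x y : R, (y * x) * x = y * (x * x))
    (tf2 : ∀ x : R, (2 : ℕ) • x = 0 → x = 0)
    (tf3 : ∀ x : R, (3 : ℕ) • x = 0 → x = 0)
    (e1 : R) (he : e1 * e1 = e1) (he0 : e1 ≠ 0) (he1 : e1 ≠ 1)
    (e : Fin 2 → R) (h1 : e 0 = e1) (h2 : e 1 = 1 - e1)
    (cond1 : ∀ (i j : Fin 2), i ≠ j → ∀ x ∈ peirceSet (e i) (e j),
      (∀ r ∈ peirceSet (e j) (e i), x * r = 0) → x = 0)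
    (cond2 : ∀ x ∈ peirceSet (e 0) (e 0),
      ((∀ r ∈ peirceSet (e 0) (e 1), x * r = 0) ∨
       (∀ r ∈ peirceSet (e 1) (e 0), r * x = 0)) → x = 0)
    (cond3 : ∀ x ∈ peirceSet (e 1) (e 1),
      ((∀ r ∈ peirceSet (e 0) (e 1), r * x = 0) ∨
       (∀ r ∈ peirceSet (e 1) (e 0), x * r = 0)) → x = 0) :
    (∀ a ∈ peirceSet (e 0) (e 0), ∀ b ∈ peirceSet (e 1) (e 1),
      (∀ x ∈ peirceSet (e 0) (e 1), (a + b) * x = x * (a + b)) →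
        a + b ∈ commCentre R) ∧
    (∀ a ∈ peirceSet (e 0) (e 0), ∀ b ∈ peirceSet (e 1) (e 1),
      (∀ x ∈ peirceSet (e 1) (e 0), (a + b) * x = x * (a + b)) →
        a + b ∈ commCentre R) :=
  comm_with_offdiag_central_general R alt_left alt_right tf2 e1 he e h1 h2 cond1 cond2 cond3
end

section
/- Let R, R' be alternative rings, e1 a nontrivial idempotent of R with Peirce decompositions on both rings (via f1 = φ(e1)), and φ: R → R' a bijective Lie multiplicative map preserving idempotents with φ(e1) = f1 a nontrivial idempotent. Then φ(R12) = R'12 and φ(R21) = R'21. -/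
/-!
In a 2-torsion-free alternative ring, `R₁₂` is exactly the set of fixed points of `x ↦ [e, x]`
and `R₂₁` that of `x ↦ [x, e]`. A bijective Lie multiplicative map semiconjugates these two maps
into their counterparts for `f = φ e`, so it carries their fixed points onto each other.
-/

open Function

theorem Function.Semiconj.image_fixedPoints {α β : Type*} {g : α → β} {fa : α → α} {fb : β → β}
    (hg : Bijective g) (h : Semiconj g fa fb) : g '' fixedPoints fa = fixedPoints fb := by
  refine (h.mapsTo_fixedPoints.image_subset).antisymm fun y hy => ?_
  obtain ⟨x, rfl⟩ := hg.2 y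
  exact ⟨x, hg.1 ((h x).trans hy), rfl⟩

section Alternative

variable {R : Type*} [NonAssocRing R]
  (hl : ∀ x y : R, (x * x) * y = x * (x * y))
  (hr : ∀ x y : R, (y * x) * x = y * (x * x))
include hl hr

theorem flexible_of_alternative_s13 (a b : R) : (a * b) * a = a * (b * a) := by
  have h := hl (a + b) a
  simp only [add_mul, mul_add] at h
  rw [hl a a, hl b a, hr a b] at h
  exact add_right_cancel (add_left_cancel h)

variable [IsAddTorsionFree R] {e : R}

theorem peirceSet_eq_fixedPoints_commutator (he : IsIdempotentElem e) :
    peirceSet e (1 - e) = fixedPoints (fun x => e * x - x * e) := by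
  ext x
  show e * x = x ∧ x * (1 - e) = x ↔ e * x - x * e = x
  have hx_one_sub : x * (1 - e) = x ↔ x * e = 0 := by rw [mul_sub, mul_one, sub_eq_self]
  refine ⟨fun ⟨hex, hxe⟩ => by rw [hex, hx_one_sub.mp hxe, sub_zero], fun h => ?_⟩
  have hexe : e * (x * e) = 0 := by
    have h' := congrArg (e * ·) h
    simp only [mul_sub, ← hl, he.eq] at h'
    exact sub_eq_self.mp h'
  have hxe : x * e = 0 := by
    have h' := congrArg (· * e) h
    simp only [sub_mul, hr, he.eq, flexible_of_alternative_s13 hl hr, hexe, zero_sub] at h'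
    -- by flexibility `(e * x) * e = e * (x * e) = 0`, so `h'` reads `-(x * e) = x * e`
    refine (smul_eq_zero.mp ?_).resolve_left (two_ne_zero (α := ℕ))
    rw [two_nsmul, ← neg_eq_iff_add_eq_zero, h']
  rw [hxe, sub_zero] at h
  exact ⟨h, hx_one_sub.mpr hxe⟩

theorem peirceSet_one_sub_eq_fixedPoints_commutator (he : IsIdempotentElem e) :
    peirceSet (1 - e) e = fixedPoints (fun x => x * e - e * x) := by
  have h := peirceSet_eq_fixedPoints_commutator hl hr he.one_sub
  rw [sub_sub_cancel] at h
  simp only [h, sub_mul, mul_sub, one_mul, mul_one, sub_sub_sub_cancel_left]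

end Alternative

theorem lie_map_offdiag_general (R R' : Type*) [NonAssocRing R] [NonAssocRing R']
    [Module ℚ R] [Module ℚ R']
    (altR_left : ∀ x y : R, (x * x) * y = x * (x * y))
    (altR_right : ∀ x y : R, (y * x) * x = y * (x * x))
    (altR'_left : ∀ x y : R', (x * x) * y = x * (x * y))
    (altR'_right : ∀ x y : R', (y * x) * x = y * (x * x))
    (e1 : R) (he : e1 * e1 = e1)
    (φ : R → R') (hbij : Function.Bijective φ)
    (hlie : ∀ x y : R, φ (x * y - y * x) = φ x * φ y - φ y * φ x)
    (f1 : R') (hf : f1 = φ e1) (hfidem : f1 * f1 = f1) :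
    φ '' peirceSet e1 (1 - e1) = peirceSet f1 (1 - f1) ∧
    φ '' peirceSet (1 - e1) e1 = peirceSet (1 - f1) f1 := by
  subst hf
  have := IsAddTorsionFree.of_module_rat R
  have := IsAddTorsionFree.of_module_rat R'
  rw [peirceSet_eq_fixedPoints_commutator altR_left altR_right he,
    peirceSet_eq_fixedPoints_commutator altR'_left altR'_right hfidem,
    peirceSet_one_sub_eq_fixedPoints_commutator altR_left altR_right he,
    peirceSet_one_sub_eq_fixedPoints_commutator altR'_left altR'_right hfidem]
  exact ⟨Semiconj.image_fixedPoints hbij (hlie e1), Semiconj.image_fixedPoints hbij (hlie · e1)⟩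

/-- A bijective Lie multiplicative idempotent-preserving and ℚ-homogeneous map
maps `R₁₂` onto `R'₁₂` and `R₂₁` onto `R'₂₁`. -/
theorem lie_map_offdiag (R R' : Type*) [NonAssocRing R] [NonAssocRing R']
    [Module ℚ R] [Module ℚ R']
    (altR_left : ∀ x y : R, (x * x) * y = x * (x * y))
    (altR_right : ∀ x y : R, (y * x) * x = y * (x * x))
    (altR'_left : ∀ x y : R', (x * x) * y = x * (x * y))
    (altR'_right : ∀ x y : R', (y * x) * x = y * (x * x))
    (e1 : R) (he : e1 * e1 = e1) (he0 : e1 ≠ 0) (he1 : e1 ≠ 1)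
    (φ : R → R') (hbij : Function.Bijective φ)
    (hlie : ∀ x y : R, φ (x * y - y * x) = φ x * φ y - φ y * φ x)
    (hidem : ∀ (a b : R) (l : ℚ),
      IsIdempotentElem (a - l • b) ↔ IsIdempotentElem (φ a - l • φ b))
    (hhom : ∀ (l : ℚ) (r : R), φ (l • r) = l • φ r)
    (f1 : R') (hf : f1 = φ e1) (hfidem : f1 * f1 = f1) (hf0 : f1 ≠ 0) (hf1 : f1 ≠ 1) :
    φ '' peirceSet e1 (1 - e1) = peirceSet f1 (1 - f1) ∧
    φ '' peirceSet (1 - e1) e1 = peirceSet (1 - f1) f1 :=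
  lie_map_offdiag_general R R' altR_left altR_right altR'_left altR'_right e1 he φ hbij hlie f1 hf
    hfidem
end
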